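/- Let p, q, ρ ∈ [0,1]. Then max{0, p+q−1, z₁} ≤ min{p, q, z₂}, and the maximum of h(p+q−r) over r ∈ [max{0, p+q−1, z₁}, min{p, q, z₂}] equals h(φ(ρ,p,q)); moreover this maximum is attained at r* := median{ max{0, p+q−1, z₁}, p+q−1/2, min{p, q, z₂} }, and p + q − r* = φ(ρ,p,q). -/
import Mathlib


/-- The binary entropy function `h(a) = -a log₂ a - (1-a) log₂ (1-a)` (with `h(0)=h(1)=0`,
since `Real.logb 2 0 = 0`). -/
noncomputable def binEnt (a : ℝ) : ℝ := -a * Real.logb 2 a - (1 - a) * Real.logb 2 (1 - a)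

/-- The median of three real numbers. -/
noncomputable def med3 (a b c : ℝ) : ℝ := max (min a b) (min (max a b) c)

/-- `z₁ = pq - ρ √(p(1-p)q(1-q))`. -/
noncomputable def z1 (ρ p q : ℝ) : ℝ := p * q - ρ * Real.sqrt (p * (1 - p) * q * (1 - q))

/-- `z₂ = pq + ρ √(p(1-p)q(1-q))`. -/
noncomputable def z2 (ρ p q : ℝ) : ℝ := p * q + ρ * Real.sqrt (p * (1 - p) * q * (1 - q))

/-- `φ(ρ,p,q) = median{ max{p,q,p+q-z₂}, 1/2, min{p+q, p+q-z₁} }`. -/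
noncomputable def phi (ρ p q : ℝ) : ℝ :=
  med3 (max (max p q) (p + q - z2 ρ p q)) (1 / 2) (min (p + q) (p + q - z1 ρ p q))


/-- The lower endpoint `max{0, p+q-1, z₁}` of the feasible interval for `r`. -/
noncomputable def Lbd (ρ p q : ℝ) : ℝ := max (max 0 (p + q - 1)) (z1 ρ p q)

/-- The upper endpoint `min{p, q, z₂}` of the feasible interval for `r`. -/
noncomputable def Ubd (ρ p q : ℝ) : ℝ := min (min p q) (z2 ρ p q)

/-- The optimizer `r* = median{ max{0,p+q-1,z₁}, p+q-1/2, min{p,q,z₂} }`. -/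
noncomputable def rstar (ρ p q : ℝ) : ℝ := med3 (Lbd ρ p q) (p + q - 1 / 2) (Ubd ρ p q)

lemma binEnt_eq (a : ℝ) : binEnt a = Real.binEntropy a / Real.log 2 := by
  simp only [binEnt, Real.binEntropy, Real.logb, Real.log_inv]; ring
lemma log2pos : (0:ℝ) < Real.log 2 := Real.log_pos (by norm_num)
lemma binEnt_mono {x y : ℝ} (h0 : 0 ≤ x) (hxy : x ≤ y) (h1 : y ≤ 1/2) :
    binEnt x ≤ binEnt y := by
  rw [binEnt_eq, binEnt_eq]
  exact div_le_div_of_nonneg_right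
    (Real.binEntropy_strictMonoOn.monotoneOn ⟨h0, by norm_num; linarith⟩
      ⟨by linarith, by norm_num; linarith⟩ hxy) log2pos.le
lemma binEnt_anti {x y : ℝ} (h0 : 1/2 ≤ x) (hxy : x ≤ y) (h1 : y ≤ 1) :
    binEnt y ≤ binEnt x := by
  rw [binEnt_eq, binEnt_eq]
  exact div_le_div_of_nonneg_right
    (Real.binEntropy_strictAntiOn.antitoneOn ⟨by norm_num; linarith, by linarith⟩
      ⟨by norm_num; linarith, h1⟩ hxy) log2pos.le

lemma med3_eq {a b c : ℝ} (hac : a ≤ c) : med3 a b c = max a (min b c) := by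
  simp only [med3, min_def, max_def]; split_ifs <;> linarith



/-- For `p, q, ρ ∈ [0,1]`, the interval `[max{0,p+q-1,z₁}, min{p,q,z₂}]` is nonempty, and
the maximum of `h(p+q-r)` over this interval is `h(φ(ρ,p,q))`, attained at
`r* = median{ max{0,p+q-1,z₁}, p+q-1/2, min{p,q,z₂} }`, with `p + q - r* = φ(ρ,p,q)`. -/
theorem max_entropy_over_interval (p q ρ : ℝ) (hp : p ∈ Set.Icc (0 : ℝ) 1)
    (hq : q ∈ Set.Icc (0 : ℝ) 1) (hρ : ρ ∈ Set.Icc (0 : ℝ) 1) :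
    Lbd ρ p q ≤ Ubd ρ p q ∧
    (∀ r ∈ Set.Icc (Lbd ρ p q) (Ubd ρ p q), binEnt (p + q - r) ≤ binEnt (phi ρ p q)) ∧
    rstar ρ p q ∈ Set.Icc (Lbd ρ p q) (Ubd ρ p q) ∧
    binEnt (p + q - rstar ρ p q) = binEnt (phi ρ p q) ∧
    p + q - rstar ρ p q = phi ρ p q := by
  obtain ⟨hp0, hp1⟩ := hp
  obtain ⟨hq0, hq1⟩ := hq
  obtain ⟨hρ0, hρ1⟩ := hρ
  have hs0 : 0 ≤ ρ * Real.sqrt (p * (1 - p) * q * (1 - q)) :=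
    mul_nonneg hρ0 (Real.sqrt_nonneg _)
  set s : ℝ := ρ * Real.sqrt (p * (1 - p) * q * (1 - q)) with hs
  have hz1 : z1 ρ p q = p * q - s := rfl
  have hz2 : z2 ρ p q = p * q + s := rfl
  have hpq0 : 0 ≤ p * q := mul_nonneg hp0 hq0
  have hpqp : p * q ≤ p := mul_le_of_le_one_right hp0 hq1
  have hpqq : p * q ≤ q := mul_le_of_le_one_left hq0 hp1
  have h1pq : p + q - 1 ≤ p * q := by nlinarith
  -- Lbd ≤ Ubd
  have hLU : Lbd ρ p q ≤ Ubd ρ p q := by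
    rw [Lbd, Ubd, hz1, hz2]
    simp only [max_le_iff, le_min_iff]
    repeat' apply And.intro
    all_goals linarith
  -- endpoints of the image interval
  set A : ℝ := p + q - Ubd ρ p q with hA
  set B : ℝ := p + q - Lbd ρ p q with hB
  have hAB : A ≤ B := by rw [hA, hB]; linarith [hLU]
  have hA0 : 0 ≤ A := by
    have h : Ubd ρ p q ≤ p :=
      le_trans (min_le_left (min p q) (z2 ρ p q)) (min_le_left p q)
    rw [hA]; linarith
  have hB1 : B ≤ 1 := by
    have h : p + q - 1 ≤ Lbd ρ p q :=
      le_trans (le_max_right 0 (p + q - 1)) (le_max_left _ (z1 ρ p q))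
    rw [hB]; linarith
  -- the clamp value
  set c : ℝ := max A (min (1/2) B) with hc
  have hAB' : max (max p q) (p + q - z2 ρ p q) ≤ min (p + q) (p + q - z1 ρ p q) := by
    rw [hz1, hz2]
    simp only [max_le_iff, le_min_iff]
    repeat' apply And.intro
    all_goals linarith
  have hphi : phi ρ p q = c := by
    have e1 : max (max p q) (p + q - z2 ρ p q) = A := by
      rw [hA, Ubd, hz2]
      simp only [min_def, max_def]
      split_ifs <;> linarith
    have e2 : min (min (p + q) (p + q - z1 ρ p q)) 1 = B := by
      rw [hB, Lbd, hz1]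
      simp only [min_def, max_def]
      split_ifs <;> linarith
    have e3 : min (1/2 : ℝ) (min (p + q) (p + q - z1 ρ p q)) = min (1/2) B := by
      rw [← e2]
      simp only [min_def]
      split_ifs <;> linarith
    rw [phi, med3_eq hAB', e1, e3, hc]
  have hrstar : p + q - rstar ρ p q = c := by
    rw [rstar, med3_eq hLU, hc, hA, hB]
    simp only [min_def, max_def]
    split_ifs <;> linarith
  have hmax : ∀ r ∈ Set.Icc (Lbd ρ p q) (Ubd ρ p q), binEnt (p + q - r) ≤ binEnt c := by
    rintro r ⟨hr1, hr2⟩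
    have hx1 : A ≤ p + q - r := by rw [hA]; linarith
    have hx2 : p + q - r ≤ B := by rw [hB]; linarith
    rcases le_total (1/2 : ℝ) A with h | h
    · rw [hc, max_eq_left (min_le_of_left_le h)]
      exact binEnt_anti h hx1 (le_trans hx2 hB1)
    · rcases le_total B (1/2 : ℝ) with h' | h'
      · rw [hc, min_eq_right h', max_eq_right hAB]
        exact binEnt_mono (le_trans hA0 hx1) hx2 h'
      · rw [hc, min_eq_left h', max_eq_right h]
        rcases le_total (p + q - r) (1/2 : ℝ) with hx | hx
        · exact binEnt_mono (le_trans hA0 hx1) hx le_rfl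
        · exact binEnt_anti le_rfl hx (le_trans hx2 hB1)
  refine ⟨hLU, ?_, ?_, ?_, ?_⟩
  · intro r hr; rw [hphi]; exact hmax r hr
  · rw [Set.mem_Icc, rstar, med3_eq hLU]
    exact ⟨le_max_left _ _, max_le hLU (min_le_right _ _)⟩
  · rw [hphi, hrstar]
  · rw [hphi, hrstar]
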